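/- arXiv:2508.07361 — 5 statements merged into one kernel-verified Lean document; each statement's English description precedes it below -/
import Mathlib

section
/- Let κ ∈ Γₖ⁺ ⊂ ℝⁿ with principal curvatures ordered κ₁ ≥ κ₂ ≥ ⋯ ≥ κₙ. Then σ_{k-1}(κ|κ₁)·κ₁ ≥ (k/n)·σₖ(κ), where σ_{k-1}(κ|κ₁) denotes σ_{k-1} of the (n−1)-tuple obtained by removing κ₁. -/
open Finset

/-- The `k`-th elementary symmetric polynomial of `κ : Fin n → ℝ`. -/
def esymm (n k : ℕ) (κ : Fin n → ℝ) : ℝ :=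
  ∑ s ∈ Finset.univ.powersetCard k, ∏ i ∈ s, κ i

/-- `σ_{k-1}(κ|κᵢ)`: the `(k-1)`-th elementary symmetric polynomial of the tuple
obtained from `κ` by removing the `i`-th entry. -/
def esymmRemoved (n k : ℕ) (κ : Fin n → ℝ) (i : Fin n) : ℝ :=
  ∑ s ∈ (Finset.univ.erase i).powersetCard k, ∏ j ∈ s, κ j

/-!
Write κ = (κ₁, λ). As σₖ(κ) = σₖ(λ) + κ₁ σₖ₋₁(λ), only the case σₖ(λ) > 0 needs work, and then
λ ∈ Γₖ⁺ and the identities ∑ᵢ λᵢ σₖ₋₁(λ|λᵢ) = k σₖ(λ), ∑ᵢ σₖ₋₁(λ|λᵢ) = (n - k) σₖ₋₁(λ) give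
k σₖ(λ) ≤ (n - k) κ₁ σₖ₋₁(λ), since λᵢ ≤ κ₁ and σₖ₋₁(λ|λᵢ) > 0.

The positivity of σₖ₋₁(λ|λᵢ) is the fact that deleting an entry maps Γₖ₊₁⁺ into Γₖ⁺. It is proved
by induction on the number of entries, together with Newton's inequality σⱼ₊₂ σⱼ ≤ σⱼ₊₁² on Γⱼ₊₁⁺:
Newton's inequality is inherited from the tuple with a positive entry deleted, and an entry can
be deleted by first deleting a nonpositive entry q, which does not leave the cone.
-/

variable {ι R : Type*}

section Algebra

variable [CommRing R] [LinearOrder R] [IsStrictOrderedRing R]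

/-- For `a, b, c = σₜ, σₜ₊₁, σₜ₊₂` of a tuple `ν`, this derives `σₜ₊₁(ν, y) > 0` from
`σₜ₊₁(ν, x) > 0` and `σₜ₊₂(ν, x, y) > 0`. -/
theorem add_mul_pos_of_mul_le_sq {a b c x y : R} (ha : 0 < a) (hN : c * a ≤ b ^ 2)
    (hx : 0 < b + x * a) (hxy : 0 < c + x * b + y * (b + x * a)) : 0 < b + y * a := by
  by_contra! h
  have : y * a * (b + x * a) ≤ -b * (b + x * a) := mul_le_mul_of_nonneg_right (by linarith) hx.le
  nlinarith [mul_pos ha hxy]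

/-- Newton's inequality survives adjoining an entry `x ≥ 0` to a tuple with
`σⱼ₋₁, σⱼ, σⱼ₊₁, σⱼ₊₂ = a, b, c, d`. -/
theorem add_mul_mul_add_mul_le_sq {a b c d x : R} (ha : 0 ≤ a) (hb : 0 < b) (hc : 0 < c)
    (hx : 0 ≤ x) (hdb : d * b ≤ c ^ 2) (hca : c * a ≤ b ^ 2) :
    (d + x * c) * (b + x * a) ≤ (c + x * b) ^ 2 := by
  have hda : d * a ≤ c * b := by
    rcases le_or_gt d 0 with hd | hd
    · nlinarith [mul_nonpos_of_nonpos_of_nonneg hd ha, mul_pos hc hb]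
    · nlinarith [mul_le_mul hdb hca (mul_nonneg hc.le ha) (sq_nonneg c), mul_pos hc hb]
  nlinarith [mul_le_mul_of_nonneg_left hda hx, mul_le_mul_of_nonneg_left hca (sq_nonneg x)]

end Algebra

def esymmOn [CommRing R] (κ : ι → R) (s : Finset ι) (j : ℕ) : R :=
  ∑ t ∈ s.powersetCard j, ∏ i ∈ t, κ i

section CommRing

variable [CommRing R] {κ : ι → R} {s : Finset ι} {j : ℕ}

@[simp]
theorem esymmOn_zero : esymmOn κ s 0 = 1 := by
  simp [esymmOn]

theorem esymmOn_one : esymmOn κ s 1 = ∑ i ∈ s, κ i := by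
  simp [esymmOn, powersetCard_one]

theorem esymmOn_eq_zero_of_card_lt (h : s.card < j) : esymmOn κ s j = 0 := by
  rw [esymmOn, powersetCard_eq_empty.2 h, sum_empty]

variable [DecidableEq ι] {p : ι}

theorem esymmOn_insert_succ (hp : p ∉ s) :
    esymmOn κ (insert p s) (j + 1) = esymmOn κ s (j + 1) + κ p * esymmOn κ s j := by
  have hpt : ∀ {l}, ∀ t ∈ s.powersetCard l, p ∉ t := fun t ht hpt =>
    hp ((mem_powersetCard.1 ht).1 hpt)
  rw [esymmOn, powersetCard_succ_insert hp, sum_union, sum_image, esymmOn, esymmOn, mul_sum]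
  · exact congrArg _ (sum_congr rfl fun t ht => prod_insert (hpt t ht))
  · intro t₁ ht₁ t₂ ht₂ h
    rw [← erase_insert (hpt t₁ ht₁), ← erase_insert (hpt t₂ ht₂)]
    exact congrArg (·.erase p) h
  · refine disjoint_left.2 fun t ht ht' => ?_
    obtain ⟨u, -, rfl⟩ := mem_image.1 ht'
    exact hpt _ ht (mem_insert_self p u)

theorem esymmOn_succ_of_mem (hp : p ∈ s) :
    esymmOn κ s (j + 1) = esymmOn κ (s.erase p) (j + 1) + κ p * esymmOn κ (s.erase p) j := by
  conv_lhs => rw [← insert_erase hp]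
  exact esymmOn_insert_succ (notMem_erase p s)

theorem sum_esymmOn_erase :
    ∑ i ∈ s, esymmOn κ (s.erase i) j = ((s.card : R) - j) * esymmOn κ s j := by
  simp only [esymmOn, mul_sum]
  rw [sum_comm' (t' := s.powersetCard j) (s' := fun t => s \ t)]
  · refine sum_congr rfl fun t ht => ?_
    rw [mem_powersetCard] at ht
    rw [sum_const, nsmul_eq_mul, card_sdiff_of_subset ht.1, Nat.cast_sub (card_le_card ht.1),
      ht.2]
  · intro i t
    simp only [mem_powersetCard, subset_erase, mem_sdiff]
    tauto

theorem sum_mul_esymmOn_erase :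
    ∑ i ∈ s, κ i * esymmOn κ (s.erase i) j = ((j : R) + 1) * esymmOn κ s (j + 1) := by
  have h : ∀ i ∈ s, κ i * esymmOn κ (s.erase i) j
      = esymmOn κ s (j + 1) - esymmOn κ (s.erase i) (j + 1) := fun i hi => by
    rw [esymmOn_succ_of_mem hi]; ring
  rw [sum_congr rfl h, sum_sub_distrib, sum_const, sum_esymmOn_erase, nsmul_eq_mul]
  push_cast
  ring

end CommRing

section Ordered

variable [CommRing R] [LinearOrder R]

/-- `Γₖ⁺` for the subtuple of `κ` indexed by `s`; the condition at `j = 0` holds as `σ₀ = 1`. -/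
def InGammaCone (κ : ι → R) (s : Finset ι) (k : ℕ) : Prop :=
  ∀ j ≤ k, 0 < esymmOn κ s j

variable {κ : ι → R} {s : Finset ι} {i p : ι} {j k : ℕ}

theorem InGammaCone.mono (h : InGammaCone κ s k) (hjk : j ≤ k) : InGammaCone κ s j :=
  fun l hl => h l (hl.trans hjk)

theorem inGammaCone_succ_iff :
    InGammaCone κ s (k + 1) ↔ InGammaCone κ s k ∧ 0 < esymmOn κ s (k + 1) :=
  ⟨fun h => ⟨h.mono k.le_succ, h _ le_rfl⟩, fun ⟨h, hk⟩ j hj =>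
    (Nat.le_succ_iff.1 hj).elim (h j) fun e => e ▸ hk⟩

theorem InGammaCone.le_card (h : InGammaCone κ s k) : k ≤ s.card := by
  by_contra! hlt
  exact (h k le_rfl).ne' (esymmOn_eq_zero_of_card_lt hlt)

variable [IsStrictOrderedRing R]

theorem InGammaCone.exists_pos (h : InGammaCone κ s (k + 1)) : ∃ p ∈ s, 0 < κ p := by
  have h1 := h 1 (by omega)
  rw [esymmOn_one] at h1
  exact exists_lt_of_sum_lt (by simpa using h1)

theorem esymmOn_pos_of_forall_pos (hpos : ∀ i ∈ s, 0 < κ i) (hj : j ≤ s.card) :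
    0 < esymmOn κ s j := by
  have hprod : ∀ t ∈ s.powersetCard j, 0 < ∏ i ∈ t, κ i := fun t ht =>
    prod_pos fun i hi => hpos i ((mem_powersetCard.1 ht).1 hi)
  exact sum_pos hprod (powersetCard_nonempty.2 hj)

variable [DecidableEq ι]

theorem InGammaCone.erase_of_nonpos (h : InGammaCone κ s k) (hp : p ∈ s) (hp0 : κ p ≤ 0) :
    InGammaCone κ (s.erase p) k := by
  intro j hj
  induction j with
  | zero => simp
  | succ j ih =>
    have hs := h (j + 1) hj
    rw [esymmOn_succ_of_mem hp] at hs
    nlinarith [ih (by omega)]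

variable (κ s)

def NewtonIneq : Prop :=
  ∀ j, InGammaCone κ s (j + 1) →
    esymmOn κ s (j + 2) * esymmOn κ s j ≤ esymmOn κ s (j + 1) ^ 2

def EraseStable : Prop :=
  ∀ k, ∀ i ∈ s, InGammaCone κ s (k + 1) → InGammaCone κ (s.erase i) k

variable {κ s}

theorem eraseStable_of_ssubset (hN : ∀ t ⊂ s, NewtonIneq κ t) (hE : ∀ t ⊂ s, EraseStable κ t) :
    EraseStable κ s := by
  intro k i hi hΓ
  by_cases hall : ∀ l ∈ s, 0 < κ l
  · have hcard := hΓ.le_card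
    exact fun j hj => esymmOn_pos_of_forall_pos (fun l hl => hall l (mem_of_mem_erase hl))
      (by rw [card_erase_of_mem hi]; omega)
  push Not at hall
  obtain ⟨q, hq, hq0⟩ := hall
  have hΓq := hΓ.erase_of_nonpos hq hq0
  obtain rfl | hiq := eq_or_ne i q
  · exact hΓq.mono k.le_succ
  have hiq' : i ∈ s.erase q := mem_erase.2 ⟨hiq, hi⟩
  have hqi : q ∈ s.erase i := mem_erase.2 ⟨hiq.symm, hq⟩
  set ν := (s.erase q).erase i
  have hν : InGammaCone κ ν k := hE _ (erase_ssubset hq) k i hiq' hΓq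
  have hNν : NewtonIneq κ ν := hN ν ((erase_ssubset hiq').trans (erase_ssubset hq))
  rintro (_ | t) ht
  · simp
  have hσq : 0 < esymmOn κ ν (t + 1) + κ i * esymmOn κ ν t := by
    rw [← esymmOn_succ_of_mem hiq']
    exact hΓq (t + 1) (by omega)
  have hσ : 0 < esymmOn κ ν (t + 2) + κ i * esymmOn κ ν (t + 1)
      + κ q * (esymmOn κ ν (t + 1) + κ i * esymmOn κ ν t) := by
    rw [← esymmOn_succ_of_mem hiq', ← esymmOn_succ_of_mem hiq', ← esymmOn_succ_of_mem hq]
    exact hΓ (t + 2) (by omega)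
  rw [esymmOn_succ_of_mem hqi, erase_right_comm]
  exact add_mul_pos_of_mul_le_sq (hν t (by omega)) (hNν t (hν.mono (by omega))) hσq hσ

theorem newtonIneq_of_ssubset (hE : EraseStable κ s) (hN : ∀ t ⊂ s, NewtonIneq κ t) :
    NewtonIneq κ s := by
  intro j hΓ
  rcases le_or_gt (esymmOn κ s (j + 2)) 0 with hneg | hpos
  · exact (mul_nonpos_of_nonpos_of_nonneg hneg (hΓ j (by omega)).le).trans (sq_nonneg _)
  obtain ⟨p, hp, hp0⟩ := hΓ.exists_pos
  set r := s.erase p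
  have hr : InGammaCone κ r (j + 1) := hE (j + 1) p hp (inGammaCone_succ_iff.2 ⟨hΓ, hpos⟩)
  have hNr : NewtonIneq κ r := hN r (erase_ssubset hp)
  obtain ⟨a, ha, hca, hσj⟩ : ∃ a, 0 ≤ a ∧ esymmOn κ r (j + 1) * a ≤ esymmOn κ r j ^ 2 ∧
      esymmOn κ s j = esymmOn κ r j + κ p * a := by
    cases j with
    | zero => exact ⟨0, le_rfl, by simp, by simp⟩
    | succ u =>
      exact ⟨esymmOn κ r u, (hr u (by omega)).le, hNr u (hr.mono (by omega)),
        esymmOn_succ_of_mem hp⟩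
  rw [hσj, esymmOn_succ_of_mem hp, esymmOn_succ_of_mem hp]
  exact add_mul_mul_add_mul_le_sq ha (hr j (by omega)) (hr (j + 1) le_rfl) hp0.le (hNr j hr) hca

theorem newtonIneq_and_eraseStable (s : Finset ι) : NewtonIneq κ s ∧ EraseStable κ s := by
  induction s using Finset.strongInduction with
  | H s ih =>
    have hE := eraseStable_of_ssubset (fun t ht => (ih t ht).1) (fun t ht => (ih t ht).2)
    exact ⟨newtonIneq_of_ssubset hE fun t ht => (ih t ht).1, hE⟩

theorem InGammaCone.erase (h : InGammaCone κ s (k + 1)) (hi : i ∈ s) :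
    InGammaCone κ (s.erase i) k :=
  (newtonIneq_and_eraseStable s).2 k i hi h

theorem succ_mul_esymmOn_le {M : R} (hΓ : InGammaCone κ s (j + 1)) (hM : ∀ i ∈ s, κ i ≤ M) :
    ((j : R) + 1) * esymmOn κ s (j + 1) ≤ M * (((s.card : R) - j) * esymmOn κ s j) :=
  calc ((j : R) + 1) * esymmOn κ s (j + 1) = ∑ i ∈ s, κ i * esymmOn κ (s.erase i) j :=
        sum_mul_esymmOn_erase.symm
    _ ≤ ∑ i ∈ s, M * esymmOn κ (s.erase i) j :=
        sum_le_sum fun i hi => mul_le_mul_of_nonneg_right (hM i hi) ((hΓ.erase hi) j le_rfl).le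
    _ = M * (((s.card : R) - j) * esymmOn κ s j) := by rw [← mul_sum, sum_esymmOn_erase]

theorem succ_mul_esymmOn_le_card_mul_of_forall_le (hΓ : InGammaCone κ s (j + 1)) (hp : p ∈ s)
    (hmax : ∀ i ∈ s, κ i ≤ κ p) :
    ((j : R) + 1) * esymmOn κ s (j + 1) ≤ s.card * (esymmOn κ (s.erase p) j * κ p) := by
  have hexp := esymmOn_succ_of_mem (κ := κ) (j := j) hp
  rcases le_or_gt (esymmOn κ (s.erase p) (j + 1)) 0 with hr | hr
  · have hj : (j : R) + 1 ≤ s.card := by exact_mod_cast hΓ.le_card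
    calc ((j : R) + 1) * esymmOn κ s (j + 1) ≤ s.card * esymmOn κ s (j + 1) :=
          mul_le_mul_of_nonneg_right hj (hΓ _ le_rfl).le
      _ ≤ s.card * (esymmOn κ (s.erase p) j * κ p) := by
          gcongr
          linarith
  · have hΓr := inGammaCone_succ_iff.2 ⟨hΓ.erase hp, hr⟩
    have hbound := succ_mul_esymmOn_le hΓr fun i hi => hmax i (mem_of_mem_erase hi)
    have hcard : (s.card : R) = (s.erase p).card + 1 := by
      exact_mod_cast (card_erase_add_one hp).symm
    rw [hexp, hcard]
    linarith

end Ordered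

theorem stmt3_general (n k : ℕ) (hn : 0 < n) (hk : 1 ≤ k)
    (κ : Fin n → ℝ) (hΓ : ∀ j, 1 ≤ j → j ≤ k → 0 < esymm n j κ)
    (hord : ∀ i j : Fin n, i ≤ j → κ j ≤ κ i) :
    (k : ℝ) / n * esymm n k κ ≤ esymmRemoved n (k - 1) κ ⟨0, hn⟩ * κ ⟨0, hn⟩ := by
  obtain ⟨j, rfl⟩ : ∃ j, k = j + 1 := ⟨k - 1, by omega⟩
  have hcone : InGammaCone κ univ (j + 1) := fun l hl =>
    l.eq_zero_or_pos.elim (fun h => by simp [h]) fun h => hΓ l h hl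
  have key := succ_mul_esymmOn_le_card_mul_of_forall_le hcone (mem_univ ⟨0, hn⟩)
    fun i _ => hord _ _ (Nat.zero_le i.val)
  rw [card_univ, Fintype.card_fin] at key
  rw [Nat.add_sub_cancel, div_mul_eq_mul_div, div_le_iff₀ (by exact_mod_cast hn)]
  push_cast
  change (j + 1 : ℝ) * esymmOn κ univ (j + 1) ≤ esymmOn κ (univ.erase _) j * κ _ * n
  linarith [key]

theorem stmt3 (n k : ℕ) (hn : 0 < n) (hk : 1 ≤ k) (hk' : k ≤ n)
    (κ : Fin n → ℝ) (hΓ : ∀ j, 1 ≤ j → j ≤ k → 0 < esymm n j κ)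
    (hord : ∀ i j : Fin n, i ≤ j → κ j ≤ κ i) :
    (k : ℝ) / n * esymm n k κ ≤ esymmRemoved n (k - 1) κ ⟨0, hn⟩ * κ ⟨0, hn⟩ :=
  stmt3_general n k hn hk κ hΓ hord
end

section
/- Let κ ∈ Γₖ⁺ ⊂ ℝⁿ with κ₁ ≥ ⋯ ≥ κₙ. Then Σᵢ σ_{k-1}(κ|κᵢ)·κᵢ² ≥ (k/n)·σₖ(κ)·κ₁, and in particular Σᵢ (∂σₖ/∂κᵢ)·κᵢ² ≥ (k/n)·σₖ(κ)·κ₁. -/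
open Finset

namespace SK

open Polynomial

lemma esymm_zero' (s : Multiset ℝ) : s.esymm 0 = 1 := by
  simp [Multiset.esymm]

lemma esymm_eq_zero (s : Multiset ℝ) {j : ℕ} (h : Multiset.card s < j) : s.esymm j = 0 := by
  simp [Multiset.esymm, Multiset.powersetCard_eq_empty _ h]

lemma esymm_nonneg {s : Multiset ℝ} (h : ∀ x ∈ s, 0 ≤ x) (j : ℕ) : 0 ≤ s.esymm j := by
  apply Multiset.sum_nonneg
  intro y hy
  obtain ⟨t, ht, rfl⟩ := Multiset.mem_map.1 hy
  exact Multiset.prod_nonneg fun x hx => h x (Multiset.mem_of_le (Multiset.mem_powersetCard.1 ht).1 hx)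

lemma esymm_pos {s : Multiset ℝ} (h : ∀ x ∈ s, 0 < x) {j : ℕ} (hj : j ≤ Multiset.card s) :
    0 < s.esymm j := by
  have hne : s.powersetCard j ≠ 0 := by
    intro h0
    have := Multiset.card_powersetCard j s
    rw [h0] at this
    simp only [Multiset.card_zero] at this
    exact absurd this.symm (Nat.choose_pos hj).ne'
  obtain ⟨t, ht⟩ := Multiset.exists_mem_of_ne_zero hne
  have htp : 0 < t.prod :=
    Multiset.prod_pos fun x hx => h x (Multiset.mem_of_le (Multiset.mem_powersetCard.1 ht).1 hx)
  calc (0:ℝ) < t.prod := htp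
    _ ≤ s.esymm j := by
        apply Multiset.single_le_sum
        · intro y hy
          obtain ⟨u, hu, rfl⟩ := Multiset.mem_map.1 hy
          exact Multiset.prod_nonneg fun x hx =>
            (h x (Multiset.mem_of_le (Multiset.mem_powersetCard.1 hu).1 hx)).le
        · exact Multiset.mem_map_of_mem _ ht

lemma esymm_cons (a : ℝ) (s : Multiset ℝ) (j : ℕ) :
    (a ::ₘ s).esymm (j+1) = s.esymm (j+1) + a * s.esymm j := by
  simp only [Multiset.esymm, Multiset.powersetCard_cons, Multiset.map_add, Multiset.sum_add,
    Multiset.map_map, Function.comp_def, Multiset.prod_cons]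
  rw [← Multiset.sum_map_mul_left]

lemma esymm_erase {a : ℝ} {s : Multiset ℝ} (ha : a ∈ s) (j : ℕ) :
    s.esymm (j+1) = (s.erase a).esymm (j+1) + a * (s.erase a).esymm j := by
  conv_lhs => rw [← Multiset.cons_erase ha]
  exact esymm_cons a (s.erase a) j

lemma prod_X_add_C_eq (s : Multiset ℝ) :
    (s.map fun a => X + C a).prod = ((s.map fun a => -a).map fun a => X - C a).prod := by
  rw [Multiset.map_map]
  congr 1
  apply Multiset.map_congr rfl
  intro x _
  simp [sub_neg_eq_add]

lemma natDegree_prod_X_add_C (s : Multiset ℝ) :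
    (s.map fun a => X + C a).prod.natDegree = Multiset.card s := by
  rw [prod_X_add_C_eq, natDegree_multiset_prod_X_sub_C_eq_card, Multiset.card_map]

lemma roots_prod_X_add_C (s : Multiset ℝ) :
    (s.map fun a => X + C a).prod.roots = s.map fun a => -a := by
  rw [prod_X_add_C_eq, roots_multiset_prod_X_sub_C]

lemma card_roots_derivative {p : ℝ[X]} (h : Multiset.card p.roots = p.natDegree) :
    Multiset.card (derivative p).roots = (derivative p).natDegree := by
  by_cases hd : derivative p = 0
  · simp [hd]
  have h1 : p.natDegree ≠ 0 := fun h0 => hd (derivative_of_natDegree_zero h0)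
  have e1 : p.natDegree ≤ Multiset.card (derivative p).roots + 1 := h ▸ p.card_roots_le_derivative
  have e2 : Multiset.card (derivative p).roots ≤ (derivative p).natDegree :=
    (derivative p).card_roots' 
  have e3 : (derivative p).natDegree ≤ p.natDegree - 1 := p.natDegree_derivative_le
  omega

lemma card_roots_iterate_derivative (p : ℝ[X]) (h : Multiset.card p.roots = p.natDegree) (m : ℕ) :
    Multiset.card (derivative^[m] p).roots = (derivative^[m] p).natDegree := by
  induction m with
  | zero => exact h
  | succ m ih => rw [Function.iterate_succ_apply']; exact card_roots_derivative ih

lemma natDegree_iterate_derivative_rr (p : ℝ[X]) (h : Multiset.card p.roots = p.natDegree)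
    (m : ℕ) (hm : m ≤ p.natDegree) :
    (derivative^[m] p).natDegree = p.natDegree - m := by
  induction m with
  | zero => simp
  | succ m ih =>
    have hm' : m ≤ p.natDegree := Nat.le_of_succ_le hm
    have ihm := ih hm'
    rw [Function.iterate_succ_apply']
    have hq := card_roots_iterate_derivative p h m
    have hne : (derivative^[m] p).natDegree ≠ 0 := by omega
    have e3 : (derivative (derivative^[m] p)).natDegree ≤ (derivative^[m] p).natDegree - 1 :=
      natDegree_derivative_le _
    have hd : derivative (derivative^[m] p) ≠ 0 := fun h0 =>
      hne (natDegree_eq_zero_of_derivative_eq_zero h0)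
    have e1 : (derivative^[m] p).natDegree ≤ Multiset.card (derivative (derivative^[m] p)).roots + 1 :=
      hq ▸ (derivative^[m] p).card_roots_le_derivative
    have e2 := (derivative (derivative^[m] p)).card_roots'
    omega

lemma key_zero {s : Multiset ℝ} {k : ℕ} (hk : 1 ≤ k) (hks : k ≤ Multiset.card s)
    (hnn : ∀ j < k, 0 ≤ s.esymm j) (h0 : s.esymm (k-1) = 0) : s.esymm k ≤ 0 := by
  by_contra hpos
  push_neg at hpos
  set m := Multiset.card s with hm
  set Q : ℝ[X] := (s.map fun a => X + C a).prod with hQ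
  have hQdeg : Q.natDegree = m := natDegree_prod_X_add_C s
  have hQroots : Multiset.card Q.roots = Q.natDegree := by
    rw [roots_prod_X_add_C, Multiset.card_map, hQdeg]
  have hQcoeff : ∀ j ≤ m, Q.coeff (m - j) = s.esymm j := by
    intro j hj
    rw [hQ, Multiset.prod_X_add_C_coeff s (Nat.sub_le m j)]
    congr 1
    omega
  have hdpos : ∀ i : ℕ, (0:ℝ) < ((i + (m-k)).descFactorial (m-k) : ℝ) := by
    intro i
    have h' : (i + (m-k)).descFactorial (m-k) ≠ 0 := by
      rw [Ne, Nat.descFactorial_eq_zero_iff_lt]; omega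
    exact_mod_cast Nat.pos_of_ne_zero h'
  set R : ℝ[X] := derivative^[m - k] Q with hR
  have hRdeg : R.natDegree = k := by
    rw [hR, natDegree_iterate_derivative_rr Q hQroots (m-k) (by omega), hQdeg]; omega
  have hRroots : Multiset.card R.roots = R.natDegree :=
    card_roots_iterate_derivative Q hQroots (m - k)
  -- coefficients of R
  have hRcoeff : ∀ i, R.coeff i = ((i + (m-k)).descFactorial (m-k) : ℝ) * Q.coeff (i + (m-k)) := by
    intro i
    rw [hR, Polynomial.coeff_iterate_derivative, nsmul_eq_mul]
  have hcoeff_eq : ∀ i ≤ k, R.coeff i = ((i + (m-k)).descFactorial (m-k) : ℝ) * s.esymm (k - i) := by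
    intro i hi
    rw [hRcoeff i]
    congr 1
    have : i + (m - k) = m - (k - i) := by omega
    rw [this, hQcoeff (k-i) (Nat.le_trans (Nat.sub_le k i) hks)]
  have hRnonneg : ∀ i, 0 ≤ R.coeff i := by
    intro i
    rcases le_or_gt i k with hi | hi
    · rw [hcoeff_eq i hi]
      apply mul_nonneg (hdpos i).le
      rcases Nat.eq_zero_or_pos i with h' | h'
      · subst h'; simpa using hpos.le
      · exact hnn _ (by omega)
    · have h2 : R.natDegree < i := by omega
      simp [coeff_eq_zero_of_natDegree_lt h2]
  have hR0 : 0 < R.coeff 0 := by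
    rw [hcoeff_eq 0 (by omega)]
    apply mul_pos (hdpos 0)
    simpa using hpos
  have hR1 : R.coeff 1 = 0 := by
    rw [hcoeff_eq 1 hk]
    simp [h0]
  have hRne : R ≠ 0 := fun h => by simp [h] at hR0
  -- all roots of R are negative
  have hroots_neg : ∀ r ∈ R.roots, r < 0 := by
    intro r hr
    by_contra hrn
    push_neg at hrn
    have heval : R.eval r = 0 := (mem_roots hRne).1 hr
    have : 0 < R.eval r := by
      rw [Polynomial.eval_eq_sum_range]
      have h01 : 0 < R.natDegree + 1 := Nat.succ_pos _
      calc (0:ℝ) < R.coeff 0 * r ^ 0 := by simpa using hR0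
        _ ≤ ∑ i ∈ Finset.range (R.natDegree + 1), R.coeff i * r ^ i := by
            apply Finset.single_le_sum (f := fun i => R.coeff i * r ^ i)
            · intro i _
              exact mul_nonneg (hRnonneg i) (pow_nonneg hrn i)
            · exact Finset.mem_range.2 h01
    linarith
  -- R splits; write as leading coeff times product of (X - root)
  have hsplit : Splits R := (splits_iff_card_roots).2 hRroots
  have hfact : R = C R.leadingCoeff * (R.roots.map fun a => X - C a).prod :=
    hsplit.eq_prod_roots
  -- compute coeff 1 from factorization
  have hprodform : (R.roots.map fun a => X - C a).prod
      = ((R.roots.map fun a => -a).map fun a => X + C a).prod := by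
    rw [Multiset.map_map]
    congr 1
    apply Multiset.map_congr rfl
    intro x _
    simp [sub_eq_add_neg]
  have hcard : Multiset.card (R.roots.map fun a => -a) = k := by
    rw [Multiset.card_map, hRroots, hRdeg]
  have hcoeff1 : (R.roots.map fun a => X - C a).prod.coeff 1
      = (R.roots.map fun a => -a).esymm (k - 1) := by
    rw [hprodform, Multiset.prod_X_add_C_coeff _ (by omega), hcard]
  have hesympos : 0 < (R.roots.map fun a => -a).esymm (k - 1) := by
    apply esymm_pos
    · intro x hx
      obtain ⟨r, hr, rfl⟩ := Multiset.mem_map.1 hx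
      linarith [hroots_neg r hr]
    · omega
  have : R.coeff 1 = R.leadingCoeff * (R.roots.map fun a => -a).esymm (k - 1) := by
    conv_lhs => rw [hfact]
    rw [coeff_C_mul, hcoeff1]
  rw [hR1] at this
  have hlc : R.leadingCoeff ≠ 0 := leadingCoeff_ne_zero.2 hRne
  exact absurd this.symm (mul_ne_zero hlc hesympos.ne')

lemma esymm_shift_eq (s : Multiset ℝ) {j : ℕ} (hj : j ≤ Multiset.card s) (t : ℝ) :
    (s.map (· + t)).esymm j
      = (Polynomial.hasseDeriv (Multiset.card s - j) (s.map fun a => X + C a).prod).eval t := by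
  set m := Multiset.card s with hm
  have hcard : Multiset.card (s.map (· + t)) = m := by rw [Multiset.card_map]
  have h1 : ((s.map (· + t)).map fun a => X + C a).prod
      = ((s.map fun a => X + C a).prod).comp (X + C t) := by
    rw [Polynomial.multiset_prod_comp, Multiset.map_map, Multiset.map_map]
    congr 1
    apply Multiset.map_congr rfl
    intro x _
    simp only [Function.comp_apply, add_comp, X_comp, C_comp, map_add]
    ring
  have h2 := Multiset.prod_X_add_C_coeff (s.map (· + t)) (k := m - j) (by omega)
  rw [hcard] at h2
  have h3 : m - (m - j) = j := by omega
  rw [h3] at h2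
  rw [← h2, h1, ← taylor_apply, taylor_coeff]

lemma esymm_shift_pos {s : Multiset ℝ} {j : ℕ} (hj : j ≤ Multiset.card s)
    (hnn : ∀ r ≤ j, 0 ≤ s.esymm r) (hp : 0 < s.esymm j) {t : ℝ} (ht : 0 ≤ t) :
    0 < (s.map (· + t)).esymm j := by
  rw [esymm_shift_eq s hj t]
  set m := Multiset.card s with hm
  set P : ℝ[X] := (s.map fun a => X + C a).prod with hP
  have hPdeg : P.natDegree = m := natDegree_prod_X_add_C s
  have hPcoeff : ∀ r ≤ m, P.coeff (m - r) = s.esymm r := by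
    intro r hr
    rw [hP, Multiset.prod_X_add_C_coeff s (Nat.sub_le m r)]
    congr 1
    omega
  set H : ℝ[X] := Polynomial.hasseDeriv (m - j) P with hH
  have hHcoeff : ∀ i, H.coeff i = ((i + (m-j)).choose (m-j) : ℝ) * P.coeff (i + (m-j)) := by
    intro i
    rw [hH, Polynomial.hasseDeriv_coeff]
  have hHnonneg : ∀ i, 0 ≤ H.coeff i := by
    intro i
    rw [hHcoeff i]
    rcases le_or_gt i j with hi | hi
    · have : i + (m - j) = m - (j - i) := by omega
      rw [this, hPcoeff (j - i) (by omega)]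
      exact mul_nonneg (Nat.cast_nonneg _) (hnn _ (Nat.sub_le j i))
    · have : P.natDegree < i + (m - j) := by omega
      rw [coeff_eq_zero_of_natDegree_lt this, mul_zero]
  have hH0 : 0 < H.coeff 0 := by
    rw [hHcoeff 0]
    have h3 : 0 + (m - j) = m - j := by omega
    rw [h3, hPcoeff j hj]
    have : (0:ℝ) < ((m - j).choose (m-j) : ℝ) := by simp
    exact mul_pos this hp
  rw [Polynomial.eval_eq_sum_range]
  calc (0:ℝ) < H.coeff 0 * t ^ 0 := by simpa using hH0
    _ ≤ ∑ i ∈ Finset.range (H.natDegree + 1), H.coeff i * t ^ i := by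
        apply Finset.single_le_sum (f := fun i => H.coeff i * t ^ i)
        · exact fun i _ => mul_nonneg (hHnonneg i) (pow_nonneg ht i)
        · exact Finset.mem_range.2 (Nat.succ_pos _)

lemma erase_cons (a : ℝ) (s : Multiset ℝ) {x : ℝ} (hx : x ∈ s) :
    (a ::ₘ s).erase x = a ::ₘ s.erase x := by
  rcases eq_or_ne x a with rfl | h
  · rw [Multiset.erase_cons_head, Multiset.cons_erase hx]
  · rw [Multiset.erase_cons_tail _ (Ne.symm h)]

lemma sum_esymm_erase (s : Multiset ℝ) (j : ℕ) :
    (s.map fun x => (s.erase x).esymm j).sum = ((Multiset.card s : ℝ) - j) * s.esymm j := by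
  induction s using Multiset.induction_on generalizing j with
  | empty =>
    simp only [Multiset.map_zero, Multiset.sum_zero, Multiset.card_zero, Nat.cast_zero, zero_sub]
    cases j with
    | zero => simp [esymm_zero']
    | succ j => simp [Multiset.esymm, Multiset.powersetCard_zero_right]
  | cons a s ih =>
    rw [Multiset.map_cons, Multiset.sum_cons, Multiset.erase_cons_head]
    have hmap : (s.map fun x => ((a ::ₘ s).erase x).esymm j)
        = s.map fun x => (a ::ₘ s.erase x).esymm j := by
      apply Multiset.map_congr rfl
      intro x hx
      rw [erase_cons a s hx]
    rw [hmap]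
    cases j with
    | zero =>
      simp only [esymm_zero']
      rw [Multiset.map_const', Multiset.sum_replicate, nsmul_eq_mul, mul_one,
        Multiset.card_cons]
      push_cast
      ring
    | succ j =>
      have hmap2 : (s.map fun x => (a ::ₘ s.erase x).esymm (j+1))
          = s.map fun x => (s.erase x).esymm (j+1) + a * (s.erase x).esymm j := by
        apply Multiset.map_congr rfl
        intro x hx
        rw [esymm_cons]
      rw [hmap2]
      have hsplit : (s.map fun x => (s.erase x).esymm (j+1) + a * (s.erase x).esymm j).sum
          = (s.map fun x => (s.erase x).esymm (j+1)).sum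
            + a * (s.map fun x => (s.erase x).esymm j).sum := by
        rw [Multiset.sum_map_add]
        congr 1
        rw [Multiset.sum_map_mul_left]
      rw [hsplit, ih (j+1), ih j, esymm_cons, Multiset.card_cons]
      push_cast
      ring
  
lemma sum_mul_esymm_erase (s : Multiset ℝ) (j : ℕ) :
    (s.map fun x => x * (s.erase x).esymm j).sum = ((j:ℝ)+1) * s.esymm (j+1) := by
  have hmap : (s.map fun x => x * (s.erase x).esymm j)
      = s.map fun x => s.esymm (j+1) - (s.erase x).esymm (j+1) := by
    apply Multiset.map_congr rfl
    intro x hx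
    rw [esymm_erase hx j]
    ring
  rw [hmap]
  have : (s.map fun x => s.esymm (j+1) - (s.erase x).esymm (j+1)).sum
      = (s.map fun _ => s.esymm (j+1)).sum - (s.map fun x => (s.erase x).esymm (j+1)).sum := by
    rw [Multiset.sum_map_sub]
  rw [this, Multiset.map_const', Multiset.sum_replicate, nsmul_eq_mul, sum_esymm_erase]
  push_cast
  ring

lemma removal : ∀ (k : ℕ) (s : Multiset ℝ),
    (∀ j, 1 ≤ j → j ≤ k → 0 < s.esymm j) → k ≤ Multiset.card s →
    ∀ a ∈ s, ∀ j ≤ k - 1, 0 < (s.erase a).esymm j := by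
  intro k
  induction k with
  | zero =>
    intro s _ _ a _ j hj
    interval_cases j
    rw [esymm_zero']; norm_num
  | succ k ih =>
    intro s hΓ hks a ha j hj
    simp only [Nat.add_sub_cancel] at hj
    rcases Nat.eq_zero_or_pos j with rfl | hj1
    · rw [esymm_zero']; norm_num
    rcases lt_or_eq_of_le hj with hjk | rfl
    · -- j ≤ k - 1 : use induction hypothesis
      exact ih s (fun i h1 h2 => hΓ i h1 (by omega)) (by omega) a ha j (by omega)
    -- j = k ≥ 1, main case
    by_contra hcon
    push_neg at hcon
    set E := s.erase a with hE
    have hcardE : Multiset.card E = Multiset.card s - 1 := Multiset.card_erase_of_mem ha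
    have hkE : j ≤ Multiset.card E := by omega
    -- the continuous function F
    set P : ℝ[X] := (E.map fun x => X + C x).prod with hP
    set F : ℝ → ℝ := fun t => (Polynomial.hasseDeriv (Multiset.card E - j) P).eval t with hF
    have hFeq : ∀ t, (E.map (· + t)).esymm j = F t := fun t => esymm_shift_eq E hkE t
    have hF0 : F 0 ≤ 0 := by
      rw [← hFeq 0]
      have : E.map (· + (0:ℝ)) = E := by
        rw [show ((· + (0:ℝ)) : ℝ → ℝ) = id from funext fun x => add_zero x, Multiset.map_id]
      rwa [this]
    -- a large T making everything positive
    set T : ℝ := 1 + (E.map fun x => |x|).sum with hT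
    have hTnn : 0 ≤ T := by
      have : 0 ≤ (E.map fun x => |x|).sum :=
        Multiset.sum_nonneg fun y hy => by
          obtain ⟨x, _, rfl⟩ := Multiset.mem_map.1 hy; exact abs_nonneg x
      linarith
    have hFT : 0 < F T := by
      rw [← hFeq T]
      apply esymm_pos _ (by rwa [Multiset.card_map])
      intro y hy
      obtain ⟨x, hx, rfl⟩ := Multiset.mem_map.1 hy
      have h1 : |x| ≤ (E.map fun x => |x|).sum := by
        apply Multiset.single_le_sum
        · intro z hz; obtain ⟨w, _, rfl⟩ := Multiset.mem_map.1 hz; exact abs_nonneg w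
        · exact Multiset.mem_map_of_mem _ hx
      have h2 : -x ≤ |x| := neg_le_abs x
      rw [hT]; linarith
    -- IVT
    have hcont : ContinuousOn F (Set.Icc 0 T) := (Polynomial.continuous _).continuousOn
    have hmem : (0:ℝ) ∈ Set.Icc (F 0) (F T) := ⟨hF0, hFT.le⟩
    obtain ⟨t₀, ht₀mem, ht₀⟩ := intermediate_value_Icc hTnn hcont hmem
    have ht₀nn : 0 ≤ t₀ := ht₀mem.1
    -- the shifted multiset
    set S := s.map (· + t₀) with hS
    have hbS : a + t₀ ∈ S := Multiset.mem_map_of_mem _ ha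
    have hSE : S.erase (a + t₀) = E.map (· + t₀) := by
      rw [hS, hE, ← Multiset.map_erase _ (add_left_injective t₀) a s]
    have hcardS : Multiset.card S = Multiset.card s := Multiset.card_map _ _
    have hSΓ : ∀ i, 1 ≤ i → i ≤ j + 1 → 0 < S.esymm i := by
      intro i h1 h2
      apply esymm_shift_pos (by omega) _ (hΓ i h1 h2) ht₀nn
      intro r hr
      rcases Nat.eq_zero_or_pos r with rfl | hr1
      · rw [esymm_zero']; norm_num
      · exact (hΓ r hr1 (by omega)).le
    -- erase from S: esymm j = 0 and lower ones positive
    have h0 : (S.erase (a + t₀)).esymm j = 0 := by rw [hSE, hFeq t₀, ht₀]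
    have hlow : ∀ i ≤ j - 1, 0 < (S.erase (a + t₀)).esymm i := by
      intro i hi
      exact ih S (fun r h1 h2 => hSΓ r h1 (by omega)) (by omega) _ hbS i (by omega)
    have hcardSE : Multiset.card (S.erase (a + t₀)) = Multiset.card S - 1 :=
      Multiset.card_erase_of_mem hbS
    rw [hcardS] at hcardSE
    -- esymm (j+1) of the erased multiset is ≤ 0
    have hE1 : (S.erase (a + t₀)).esymm (j+1) ≤ 0 := by
      rcases le_or_gt (j+1) (Multiset.card (S.erase (a + t₀))) with hle | hlt
      · apply key_zero (by omega) hle _ (by simpa using h0)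
        intro i hi
        rcases Nat.eq_zero_or_pos i with rfl | hi1
        · rw [esymm_zero']; norm_num
        rcases lt_or_eq_of_le (Nat.le_of_lt_succ hi) with h' | rfl
        · exact (hlow i (by omega)).le
        · exact le_of_eq h0.symm
      · rw [esymm_eq_zero _ hlt]
    -- contradiction with esymm (j+1) S > 0
    have hid := esymm_erase hbS j
    have hpos : 0 < S.esymm (j+1) := hSΓ (j+1) (by omega) (by omega)
    rw [hid, h0, mul_zero, add_zero] at hpos
    linarith

variable {n : ℕ} (κ : Fin n → ℝ)

lemma esymm_eq_multiset (j : ℕ) : esymm n j κ = (Finset.univ.val.map κ).esymm j := by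
  rw [Finset.esymm_map_val, esymm]

lemma erase_val_eq (i : Fin n) :
    (Finset.univ.val.map κ).erase (κ i) = (Finset.univ.erase i).val.map κ := by
  have h1 : (Finset.univ.erase i).val = Finset.univ.val.erase i := Finset.erase_val _ _
  have h2 : Finset.univ.val = i ::ₘ Finset.univ.val.erase i :=
    (Multiset.cons_erase (Finset.mem_univ i : i ∈ (Finset.univ : Finset (Fin n)))).symm
  rw [h1]
  conv_lhs => rw [h2]
  rw [Multiset.map_cons, Multiset.erase_cons_head]

lemma esymmRemoved_eq_multiset (j : ℕ) (i : Fin n) :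
    esymmRemoved n j κ i = ((Finset.univ.val.map κ).erase (κ i)).esymm j := by
  rw [erase_val_eq, Finset.esymm_map_val, esymmRemoved]


end SK

theorem stmt4 (n k : ℕ) (hn : 0 < n) (hk : 1 ≤ k) (hk' : k ≤ n)
    (κ : Fin n → ℝ) (hΓ : ∀ j, 1 ≤ j → j ≤ k → 0 < esymm n j κ)
    (hord : ∀ i j : Fin n, i ≤ j → κ j ≤ κ i) :
    (k : ℝ) / n * esymm n k κ * κ ⟨0, hn⟩
      ≤ ∑ i, esymmRemoved n (k - 1) κ i * κ i ^ 2 := by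
  classical
  set s : Multiset ℝ := Finset.univ.val.map κ with hs
  have hcard : Multiset.card s = n := by
    rw [hs, Multiset.card_map]; simp
  have hΓs : ∀ j, 1 ≤ j → j ≤ k → 0 < s.esymm j := by
    intro j h1 h2
    rw [← SK.esymm_eq_multiset]
    exact hΓ j h1 h2
  set i0 : Fin n := ⟨0, hn⟩ with hi0
  set a : ℝ := κ i0 with hadef
  have ha : a ∈ s := by rw [hs]; exact Multiset.mem_map_of_mem κ (Finset.mem_univ i0)
  have hmax : ∀ x ∈ s, x ≤ a := by
    intro x hx
    obtain ⟨i, _, rfl⟩ := Multiset.mem_map.1 hx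
    exact hord i0 i (by simp [hi0, Fin.le_def])
  set E : Multiset ℝ := s.erase a with hEdef
  have hcardE : Multiset.card E = n - 1 := by
    rw [hEdef, Multiset.card_erase_of_mem ha, hcard]; rfl
  have hremoval := SK.removal k s hΓs (by omega) a ha
  have hEpos : 0 < E.esymm (k - 1) := hremoval (k-1) le_rfl
  -- positivity of a
  have ha_pos : 0 < a := by
    have h1 : 0 < s.esymm 1 := hΓs 1 le_rfl hk
    have h2 : s.esymm 1 = s.sum := by
      simp [Multiset.esymm, Multiset.powersetCard_one, Multiset.map_map]
    have h3 : s.sum ≤ (Multiset.card s) • a := Multiset.sum_le_card_nsmul s a hmax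
    rw [h2] at h1
    rw [hcard, nsmul_eq_mul] at h3
    by_contra hc
    push_neg at hc
    have : (n:ℝ) * a ≤ 0 := mul_nonpos_of_nonneg_of_nonpos (Nat.cast_nonneg n) hc
    linarith
  -- Step B : k/n * esymm k ≤ a * esymm (k-1) E
  have hkey : (k:ℝ)/n * s.esymm k ≤ a * E.esymm (k-1) := by
    have hsplit : s.esymm k = E.esymm k + a * E.esymm (k-1) := by
      have := SK.esymm_erase ha (k-1)
      rwa [Nat.sub_add_cancel hk] at this
    have hnR : (0:ℝ) < n := by exact_mod_cast hn
    have hkn : (k:ℝ)/n ≤ 1 := by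
      rw [div_le_one hnR]; exact_mod_cast hk'
    have hsk : 0 < s.esymm k := hΓs k hk le_rfl
    rcases le_or_gt (E.esymm k) 0 with hEk | hEk
    · -- easy case
      have h1 : s.esymm k ≤ a * E.esymm (k-1) := by rw [hsplit]; linarith
      calc (k:ℝ)/n * s.esymm k ≤ 1 * s.esymm k := by
            apply mul_le_mul_of_nonneg_right hkn hsk.le
        _ = s.esymm k := one_mul _
        _ ≤ a * E.esymm (k-1) := h1
    · -- hard case: E ∈ Γ_k
      have hkcardE : k ≤ Multiset.card E := by
        by_contra hc
        push_neg at hc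
        rw [SK.esymm_eq_zero E hc] at hEk
        exact absurd hEk (lt_irrefl 0)
      have hΓE : ∀ j, 1 ≤ j → j ≤ k → 0 < E.esymm j := by
        intro j h1 h2
        rcases lt_or_eq_of_le h2 with h' | rfl
        · exact hremoval j (by omega)
        · exact hEk
      have hremE := SK.removal k E hΓE hkcardE
      -- k * esymm k E ≤ (n - k) * a * esymm (k-1) E
      have hI3 : (E.map fun x => x * (E.erase x).esymm (k-1)).sum = (k:ℝ) * E.esymm k := by
        have := SK.sum_mul_esymm_erase E (k-1)
        rw [Nat.sub_add_cancel hk] at this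
        rw [this]
        congr 1
        have : ((k-1:ℕ):ℝ) = (k:ℝ) - 1 := by
          push_cast [Nat.cast_sub hk]; ring
        rw [this]; ring
      have hI2 : (E.map fun x => a * (E.erase x).esymm (k-1)).sum
          = a * (((n:ℝ) - k) * E.esymm (k-1)) := by
        rw [Multiset.sum_map_mul_left, SK.sum_esymm_erase]
        congr 2
        rw [hcardE]
        push_cast [Nat.cast_sub (by omega : 1 ≤ n), Nat.cast_sub hk]
        ring
      have hle : (E.map fun x => x * (E.erase x).esymm (k-1)).sum
          ≤ (E.map fun x => a * (E.erase x).esymm (k-1)).sum := by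
        apply Multiset.sum_map_le_sum_map
        intro x hx
        have h1 : 0 < (E.erase x).esymm (k-1) := hremE x hx (k-1) le_rfl
        have h2 : x ≤ a := hmax x (Multiset.mem_of_mem_erase (hEdef ▸ hx))
        exact mul_le_mul_of_nonneg_right h2 h1.le
      rw [hI3, hI2] at hle
      -- conclude by arithmetic
      rw [hsplit]
      rw [div_mul_eq_mul_div, div_le_iff₀ hnR]
      have hkR : (0:ℝ) < k := by exact_mod_cast hk
      nlinarith [hEpos, ha_pos]
  -- Step A : bound the sum below by the first term
  have hterm : ∀ i : Fin n, 0 ≤ esymmRemoved n (k-1) κ i * κ i ^ 2 := by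
    intro i
    apply mul_nonneg _ (sq_nonneg _)
    rw [SK.esymmRemoved_eq_multiset]
    have hki : κ i ∈ s := Multiset.mem_map_of_mem κ (Finset.mem_univ i)
    exact (SK.removal k s hΓs (by omega) (κ i) hki (k-1) le_rfl).le
  have hsum : esymmRemoved n (k-1) κ i0 * κ i0 ^ 2
      ≤ ∑ i, esymmRemoved n (k-1) κ i * κ i ^ 2 :=
    Finset.single_le_sum (fun i _ => hterm i) (Finset.mem_univ i0)
  have hfirst : esymmRemoved n (k-1) κ i0 * κ i0 ^ 2 = E.esymm (k-1) * a^2 := by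
    rw [SK.esymmRemoved_eq_multiset]
  calc (k : ℝ) / n * esymm n k κ * κ i0
      = ((k:ℝ)/n * s.esymm k) * a := by rw [SK.esymm_eq_multiset]
    _ ≤ (a * E.esymm (k-1)) * a := by
        apply mul_le_mul_of_nonneg_right hkey ha_pos.le
    _ = E.esymm (k-1) * a^2 := by ring
    _ = esymmRemoved n (k-1) κ i0 * κ i0 ^ 2 := hfirst.symm
    _ ≤ ∑ i, esymmRemoved n (k-1) κ i * κ i ^ 2 := hsum
end

section
/- Let β > 1, 0 < R₁ ≤ R₂, and g: [0,∞) → ℝ smooth, g ≥ 0, with g(0) = ⋯ = g^{(⌊β⌋)}(0) = 0. Then there exists C > 0 such that for all λ ≥ 1 and r ∈ [R₁, R₂], f'(λ^{-1}r)/(λ·f(λ^{-1}r)) ≤ C, where f(s) = s^β + g(s). -/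
open Set

private lemma aux_taylor (k : ℕ) : ∀ f : ℝ → ℝ, ContDiff ℝ (⊤:ℕ∞) f →
    (∀ j < k, iteratedDeriv j f 0 = 0) → ∀ R : ℝ, 0 < R →
    ∃ M > (0:ℝ), ∀ s ∈ Icc (0:ℝ) R, |f s| ≤ M * s ^ k := by
  induction k with
  | zero =>
    intro f hf _ R hR
    obtain ⟨Cb, hCb⟩ := (isCompact_Icc (a := (0:ℝ)) (b := R)).exists_bound_of_continuousOn
      hf.continuous.continuousOn
    refine ⟨max Cb 1, lt_of_lt_of_le one_pos (le_max_right _ _), fun s hs => ?_⟩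
    simpa using (hCb s hs).trans (le_max_left _ _)
  | succ k ih =>
    intro f hf hf0 R hR
    obtain ⟨M, hM, hMb⟩ := ih (deriv f) (contDiff_infty_iff_deriv.mp hf).2
      (fun j hj => by
        rw [← iteratedDeriv_succ']
        exact hf0 (j + 1) (by omega)) R hR
    refine ⟨M, hM, fun s hs => ?_⟩
    obtain ⟨hs0, hsR⟩ := hs
    have hf00 : f 0 = 0 := by simpa using hf0 0 (Nat.succ_pos k)
    have key : ‖f s - f 0‖ ≤ (M * s ^ k) * ‖s - 0‖ := by
      apply (convex_Icc (0:ℝ) s).norm_image_sub_le_of_norm_deriv_le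
        (fun x _ => (contDiff_infty_iff_deriv.mp hf).1 x)
        (fun x hx => ?_) (left_mem_Icc.mpr hs0) (right_mem_Icc.mpr hs0)
      have h1 : |deriv f x| ≤ M * x ^ k := hMb x ⟨hx.1, hx.2.trans hsR⟩
      have h2 : x ^ k ≤ s ^ k := pow_le_pow_left₀ hx.1 hx.2 k
      calc ‖deriv f x‖ = |deriv f x| := rfl
        _ ≤ M * x ^ k := h1
        _ ≤ M * s ^ k := by nlinarith
    rw [hf00, sub_zero, sub_zero, Real.norm_eq_abs, Real.norm_eq_abs,
      abs_of_nonneg hs0] at key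
    calc |f s| ≤ (M * s ^ k) * s := key
      _ = M * s ^ (k + 1) := by ring

theorem stmt11 (β R₁ R₂ : ℝ) (hβ : 1 < β) (hR₁ : 0 < R₁) (hR : R₁ ≤ R₂) (g : ℝ → ℝ)
    (hg : ContDiff ℝ (⊤ : ℕ∞) g)
    (hgpos : ∀ s : ℝ, 0 ≤ s → 0 ≤ g s)
    (hg0 : ∀ j ≤ ⌊β⌋₊, iteratedDeriv j g 0 = 0) :
    ∃ C > (0 : ℝ), ∀ lam : ℝ, 1 ≤ lam → ∀ r ∈ Icc R₁ R₂,
      deriv (fun s : ℝ => s ^ β + g s) (lam⁻¹ * r)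
        / (lam * ((lam⁻¹ * r) ^ β + g (lam⁻¹ * r))) ≤ C := by
  set n := ⌊β⌋₊ with hn
  have hR₂ : 0 < R₂ := hR₁.trans_le hR
  have hg' : ContDiff ℝ (⊤:ℕ∞) g := hg.of_le (by simp)
  obtain ⟨M, hM, hMb⟩ := aux_taylor n (deriv g) (contDiff_infty_iff_deriv.mp hg').2
    (fun j hj => by
      rw [← iteratedDeriv_succ']
      exact hg0 (j + 1) (by omega)) R₂ hR₂
  have hβn : β < (n : ℝ) + 1 := by
    have := Nat.lt_floor_add_one β
    exact_mod_cast this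
  have he : (0:ℝ) ≤ (n : ℝ) + 1 - β := by linarith
  set K := R₂ ^ ((n:ℝ) + 1 - β) with hK
  have hK0 : 0 < K := Real.rpow_pos_of_pos hR₂ _
  refine ⟨(β + M * K) / R₁, by positivity, ?_⟩
  intro lam hlam r hr
  have hlam0 : 0 < lam := lt_of_lt_of_le one_pos hlam
  have hr0 : 0 < r := hR₁.trans_le hr.1
  set s := lam⁻¹ * r with hs
  have hs0 : 0 < s := by positivity
  have hsr : lam * s = r := by rw [hs, ← mul_assoc, mul_inv_cancel₀ hlam0.ne', one_mul]
  have hsR : s ≤ R₂ := by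
    have h1 : s ≤ r := by
      calc s = lam⁻¹ * r := rfl
        _ ≤ 1 * r := by
          apply mul_le_mul_of_nonneg_right _ hr0.le
          exact inv_le_one_of_one_le₀ hlam
        _ = r := one_mul r
    exact h1.trans hr.2
  -- derivative computation
  have hd : deriv (fun x : ℝ => x ^ β + g x) s = β * s ^ (β - 1) + deriv g s := by
    have h1 : HasDerivAt (fun x : ℝ => x ^ β) (β * s ^ (β - 1)) s :=
      Real.hasDerivAt_rpow_const (Or.inl hs0.ne')
    have h2 : HasDerivAt g (deriv g s) s :=
      ((hg.differentiable (by simp)) s).hasDerivAt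
    exact (h1.add h2).deriv
  rw [hd]
  -- numerator bound
  have hgd : |deriv g s| ≤ M * s ^ n := hMb s ⟨hs0.le, hsR⟩
  have hsen : (s : ℝ) ^ n = s ^ (β - 1) * s ^ ((n:ℝ) + 1 - β) := by
    rw [← Real.rpow_natCast s n, ← Real.rpow_add hs0]
    ring_nf
  have hseK : s ^ ((n:ℝ) + 1 - β) ≤ K := Real.rpow_le_rpow hs0.le hsR he
  have hnum : β * s ^ (β - 1) + deriv g s ≤ (β + M * K) * s ^ (β - 1) := by
    have h1 : deriv g s ≤ M * s ^ n := (le_abs_self _).trans hgd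
    have h2 : M * s ^ n ≤ M * (K * s ^ (β - 1)) := by
      rw [hsen]
      have hp : (0:ℝ) < s ^ (β - 1) := Real.rpow_pos_of_pos hs0 _
      nlinarith [mul_le_mul_of_nonneg_left hseK (mul_pos hM hp).le]
    nlinarith
  -- denominator facts
  have hDpos : 0 < s ^ β + g s :=
    add_pos_of_pos_of_nonneg (Real.rpow_pos_of_pos hs0 _) (hgpos s hs0.le)
  have hDb : lam * s ^ β ≤ lam * (s ^ β + g s) := by
    have := hgpos s hs0.le
    nlinarith
  have hsb : lam * s ^ β = r * s ^ (β - 1) := by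
    rw [show β = (β - 1) + 1 by ring, Real.rpow_add_one hs0.ne']
    rw [← hsr]; ring
  calc (β * s ^ (β - 1) + deriv g s) / (lam * (s ^ β + g s))
      ≤ ((β + M * K) * s ^ (β - 1)) / (lam * s ^ β) := by
        apply div_le_div₀ (by positivity) hnum (by positivity) hDb
    _ = (β + M * K) / r := by
        rw [hsb, mul_div_mul_right _ _ (ne_of_gt (Real.rpow_pos_of_pos hs0 (β - 1)))]
    _ ≤ (β + M * K) / R₁ := by
        apply div_le_div_of_nonneg_left (by positivity) hR₁ hr.1
end

section
/- Let γ > 0 and β, k, α with β − kα ≥ 1 + δ for some δ > 0 (specifically ⌊β⌋+1−kα > β−kα > 1). Suppose r: [0,∞) → (0,∞) is differentiable, bounded above, and satisfies r'(t) ≥ −γ r(t)^{β−kα} − Cγ r(t)^{⌊β⌋+1−kα} + γ r(t) for some C ≥ 0. Then there exists c > 0 with r(t) ≥ c for all t ≥ 0. -/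
/-!
Both exponents exceed 1, so near `0` the two negative terms are `o(r)` and the right-hand side
is positive for `0 < r ≤ ε`. Hence `r' > 0` wherever `r` meets the level `min (r 0) ε`, and a
comparison (fencing) argument shows `r` never drops below that level.
-/

open Set Filter Topology

lemma eventually_mul_rpow_lt_mul {p : ℝ} (hp : 1 < p) (M : ℝ) {a : ℝ} (ha : 0 < a) :
    ∀ᶠ x in 𝓝[>] (0 : ℝ), M * x ^ p < a * x := by
  have hlim : Tendsto (fun x : ℝ => M * x ^ (p - 1)) (𝓝 0) (𝓝 0) := by
    have := ((Real.continuous_rpow_const (by linarith : 0 ≤ p - 1)).tendsto 0).const_mul M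
    rwa [Real.zero_rpow (by linarith), mul_zero] at this
  filter_upwards [nhdsWithin_le_nhds (hlim.eventually (gt_mem_nhds ha)), self_mem_nhdsWithin]
    with x hsmall (hx : 0 < x)
  calc M * x ^ p = M * x ^ (p - 1) * x := by
        rw [mul_assoc, ← Real.rpow_add_one hx.ne', sub_add_cancel]
    _ < a * x := mul_lt_mul_of_pos_right hsmall hx

lemma exists_forall_mul_rpow_add_mul_rpow_lt {p q : ℝ} (hp : 1 < p) (hq : 1 < q) (M N : ℝ)
    {a : ℝ} (ha : 0 < a) :
    ∃ ε > 0, ∀ x ∈ Ioc 0 ε, M * x ^ p + N * x ^ q < a * x := by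
  have hsmall : ∀ᶠ x in 𝓝[>] (0 : ℝ), M * x ^ p + N * x ^ q < a * x := by
    filter_upwards [eventually_mul_rpow_lt_mul hp M (half_pos ha),
      eventually_mul_rpow_lt_mul hq N (half_pos ha)] with x hM hN
    linarith
  obtain ⟨ε, hε, hsub⟩ := mem_nhdsGT_iff_exists_Ioc_subset.mp hsmall
  exact ⟨ε, hε, hsub⟩

lemma le_of_forall_eq_hasDerivAt_pos {r r' : ℝ → ℝ} {a c : ℝ}
    (hderiv : ∀ t, a ≤ t → HasDerivAt r (r' t) t) (hc : c ≤ r a)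
    (hbarrier : ∀ t, a ≤ t → r t = c → 0 < r' t) :
    ∀ t, a ≤ t → c ≤ r t := by
  intro t ht
  have hcont : ContinuousOn (fun s => -r s) (Icc a t) := fun s hs =>
    (hderiv s hs.1).continuousAt.neg.continuousWithinAt
  have hle := image_le_of_deriv_right_lt_deriv_boundary' (B := fun _ => -c) (B' := 0) hcont
    (fun s hs => (hderiv s hs.1).neg.hasDerivWithinAt) (neg_le_neg hc) continuousOn_const
    (fun _ _ => hasDerivWithinAt_const _ _ (-c))
    (fun s hs hrs => neg_lt_zero.mpr (hbarrier s hs.1 (neg_inj.mp hrs)))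
    (right_mem_Icc.mpr ht)
  exact neg_le_neg_iff.mp hle

theorem stmt12_general (γ C β α : ℝ) (k : ℕ) (hγ : 0 < γ)
    (hexp : 1 < β - k * α)
    (r r' : ℝ → ℝ)
    (hderiv : ∀ t : ℝ, 0 ≤ t → HasDerivAt r (r' t) t)
    (hpos : ∀ t : ℝ, 0 ≤ t → 0 < r t)
    (hineq : ∀ t : ℝ, 0 ≤ t →
      -γ * r t ^ (β - k * α) - C * γ * r t ^ ((⌊β⌋₊ : ℝ) + 1 - k * α) + γ * r t ≤ r' t) :
    ∃ c > (0 : ℝ), ∀ t : ℝ, 0 ≤ t → c ≤ r t := by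
  have hexp' : 1 < (⌊β⌋₊ : ℝ) + 1 - k * α := by linarith [Nat.lt_floor_add_one β]
  obtain ⟨ε, hε, hsmall⟩ := exists_forall_mul_rpow_add_mul_rpow_lt hexp hexp' γ (C * γ) hγ
  refine ⟨min (r 0) ε, lt_min (hpos 0 le_rfl) hε,
    le_of_forall_eq_hasDerivAt_pos hderiv (min_le_left _ _) fun t ht hrt => ?_⟩
  have := hsmall (r t) ⟨hpos t ht, hrt ▸ min_le_right _ _⟩
  linarith [hineq t ht]

theorem stmt12 (γ C β α : ℝ) (k : ℕ) (hγ : 0 < γ) (hC : 0 ≤ C) (hk : 1 ≤ k) (hα : 0 < α)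
    (hexp : 1 < β - k * α)
    (r r' : ℝ → ℝ)
    (hderiv : ∀ t : ℝ, 0 ≤ t → HasDerivAt r (r' t) t)
    (hpos : ∀ t : ℝ, 0 ≤ t → 0 < r t)
    (hbdd : ∃ R : ℝ, ∀ t : ℝ, 0 ≤ t → r t ≤ R)
    (hineq : ∀ t : ℝ, 0 ≤ t →
      -γ * r t ^ (β - k * α) - C * γ * r t ^ ((⌊β⌋₊ : ℝ) + 1 - k * α) + γ * r t ≤ r' t) :
    ∃ c > (0 : ℝ), ∀ t : ℝ, 0 ≤ t → c ≤ r t :=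
  stmt12_general γ C β α k hγ hexp r r' hderiv hpos hineq
end

section
/- Let γ > 0, C ≥ 0, r₀ > 0, q > 1, and μ > 0 with μ ≠ q − 1. Suppose r: [0,∞) → (0,∞) satisfies r'(t) = −(γ + C e^{−μγ t}) r(t)^q + γ r(t), r(0) = r₀. Then r(t) → 1 as t → ∞. -/
/-!
The Bernoulli substitution `u = r ^ (1 - q)` turns the equation into the linear one
`u' = k (1 - u) + (q - 1) C e^{-μγt}` with `k = (q - 1) γ > 0`. Its solution
`u t = 1 + B e^{-μγt} + (u 0 - 1 - B) e^{-kt}`, where `B = (q - 1) C / (k - μγ)` is defined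
because `μ ≠ q - 1`, tends to `1`, hence so does `r = u ^ (1 - q)⁻¹`.
-/

open Set Real Filter

lemma HasDerivAt.rpow_one_sub_of_bernoulli {r : ℝ → ℝ} {a b q t : ℝ}
    (hr : HasDerivAt r (-a * r t ^ q + b * r t) t) (ht : 0 < r t) :
    HasDerivAt (fun s => r s ^ (1 - q)) ((q - 1) * (a - b * r t ^ (1 - q))) t := by
  convert hr.rpow_const (p := 1 - q) (Or.inl ht.ne') using 1
  have hq : r t ^ q * r t ^ (1 - q - 1) = 1 := by
    rw [← rpow_add ht]; norm_num
  have h1 : r t * r t ^ (1 - q - 1) = r t ^ (1 - q) := by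
    rw [mul_comm, ← rpow_add_one ht.ne']; ring_nf
  linear_combination (1 - q) * a * hq - (1 - q) * b * h1

lemma apply_eq_apply_zero_of_hasDerivAt_zero {f : ℝ → ℝ} (hf : ∀ t, 0 ≤ t → HasDerivAt f 0 t)
    {t : ℝ} (ht : 0 ≤ t) : f t = f 0 :=
  constant_of_has_deriv_right_zero (fun x hx => (hf x hx.1).continuousAt.continuousWithinAt)
    (fun x hx => (hf x hx.1).hasDerivWithinAt) t (right_mem_Icc.2 ht)

lemma hasDerivAt_exp_neg_mul (c t : ℝ) :
    HasDerivAt (fun s => exp (-(c * s))) (-c * exp (-(c * t))) t := by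
  simpa [mul_comm] using ((hasDerivAt_id t).const_mul c).neg.exp

lemma eq_of_hasDerivAt_linear {u : ℝ → ℝ} {k c D : ℝ} (hkc : k ≠ c)
    (hu : ∀ t, 0 ≤ t → HasDerivAt u (k * (1 - u t) + D * exp (-(c * t))) t) {t : ℝ}
    (ht : 0 ≤ t) :
    u t = 1 + D / (k - c) * exp (-(c * t)) + (u 0 - 1 - D / (k - c)) * exp (-(k * t)) := by
  set B := D / (k - c)
  have hB : B * (k - c) = D := div_mul_cancel₀ _ (sub_ne_zero.2 hkc)
  have hconst : ∀ s, 0 ≤ s →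
      HasDerivAt (fun s => exp (k * s) * (u s - 1 - B * exp (-(c * s)))) 0 s := by
    intro s hs
    have hexp : HasDerivAt (fun s => exp (k * s)) (k * exp (k * s)) s := by
      simpa [mul_comm] using ((hasDerivAt_id s).const_mul k).exp
    refine (hexp.mul (((hu s hs).sub_const 1).sub
      ((hasDerivAt_exp_neg_mul c s).const_mul B))).congr_deriv ?_
    simp only [Pi.sub_apply]
    linear_combination -exp (k * s) * exp (-(c * s)) * hB
  have h := apply_eq_apply_zero_of_hasDerivAt_zero hconst ht
  have hinv : exp (-(k * t)) * exp (k * t) = 1 := by rw [← exp_add]; simp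
  simp only [mul_zero, neg_zero, exp_zero, one_mul, mul_one] at h
  linear_combination exp (-(k * t)) * h - (u t - 1 - B * exp (-(c * t))) * hinv

lemma tendsto_one_add_exp_neg_mul {c k B A : ℝ} (hc : 0 < c) (hk : 0 < k) :
    Tendsto (fun t => 1 + B * exp (-(c * t)) + A * exp (-(k * t))) atTop (nhds 1) := by
  have hdecay : ∀ {a : ℝ}, 0 < a → Tendsto (fun t => exp (-(a * t))) atTop (nhds 0) :=
    fun ha => tendsto_exp_neg_atTop_nhds_zero.comp (tendsto_id.const_mul_atTop ha)
  simpa using ((hdecay hc).const_mul B).const_add 1 |>.add ((hdecay hk).const_mul A)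

lemma tendsto_one_of_tendsto_rpow {r : ℝ → ℝ} {p : ℝ} (hp : p ≠ 0)
    (hpos : ∀ᶠ t in atTop, 0 < r t) (hr : Tendsto (fun t => r t ^ p) atTop (nhds 1)) :
    Tendsto r atTop (nhds 1) := by
  refine (hr.rpow_const (p := p⁻¹) (Or.inl one_ne_zero)).congr' ?_ |>.trans (by rw [one_rpow])
  filter_upwards [hpos] with t ht
  rw [← rpow_mul ht.le, mul_inv_cancel₀ hp, rpow_one]

theorem stmt18_general (γ C q μ : ℝ) (hγ : 0 < γ)
    (hq : 1 < q) (hμ : 0 < μ) (hμq : μ ≠ q - 1)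
    (r : ℝ → ℝ)
    (hpos : ∀ t : ℝ, 0 ≤ t → 0 < r t)
    (hderiv : ∀ t : ℝ, 0 ≤ t →
      HasDerivAt r (-(γ + C * Real.exp (-μ * γ * t)) * r t ^ q + γ * r t) t) :
    Tendsto r atTop (nhds 1) := by
  have hkc : (q - 1) * γ ≠ μ * γ := fun h => hμq (mul_right_cancel₀ hγ.ne' h).symm
  have hlinear : ∀ t, 0 ≤ t → HasDerivAt (fun s => r s ^ (1 - q))
      ((q - 1) * γ * (1 - r t ^ (1 - q)) + (q - 1) * C * exp (-(μ * γ * t))) t := by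
    intro t ht
    convert (hderiv t ht).rpow_one_sub_of_bernoulli (hpos t ht) using 1
    ring_nf
  refine tendsto_one_of_tendsto_rpow (p := 1 - q) (by linarith)
    (eventually_atTop.2 ⟨0, hpos⟩) ?_
  refine (tendsto_one_add_exp_neg_mul (k := (q - 1) * γ) (mul_pos hμ hγ)
    (mul_pos (sub_pos.2 hq) hγ)).congr'
    (eventually_atTop.2 ⟨0, fun t ht => (eq_of_hasDerivAt_linear hkc hlinear ht).symm⟩)

theorem stmt18 (γ C r₀ q μ : ℝ) (hγ : 0 < γ) (hC : 0 ≤ C) (hr₀ : 0 < r₀)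
    (hq : 1 < q) (hμ : 0 < μ) (hμq : μ ≠ q - 1)
    (r : ℝ → ℝ)
    (hpos : ∀ t : ℝ, 0 ≤ t → 0 < r t)
    (hr0 : r 0 = r₀)
    (hderiv : ∀ t : ℝ, 0 ≤ t →
      HasDerivAt r (-(γ + C * Real.exp (-μ * γ * t)) * r t ^ q + γ * r t) t) :
    Tendsto r atTop (nhds 1) :=
  stmt18_general γ C q μ hγ hq hμ hμq r hpos hderiv
end
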